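/- Let p and q be probability measures on ℝ^d with densities, and let S be a measurable set with p(S) ≥ ρ > 0. Then the total variation distance between the conditional measures p(·|S) and q(·|S) satisfies d_TV(q(·|S), p(·|S)) ≤ (3/(2ρ)) · d_TV(q, p). -/

import Mathlib

open MeasureTheory Set

/-- Lemma (conditional TV bound): for probability densities `p, q` on ℝ^d and a
measurable set `S` with `p(S) ≥ ρ > 0`,
`d_TV(q(·|S), p(·|S)) ≤ (3/(2ρ)) d_TV(q, p)`, where `d_TV(p,q) = ½∫|p-q|`. -/
theorem stmt0 {d : ℕ} (p q : (Fin d → ℝ) → ℝ) (S : Set (Fin d → ℝ))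
    (hS : MeasurableSet S)
    (hp0 : ∀ x, 0 ≤ p x) (hq0 : ∀ x, 0 ≤ q x)
    (hpi : Integrable p) (hqi : Integrable q)
    (hp1 : ∫ x, p x = 1) (hq1 : ∫ x, q x = 1)
    (ρ : ℝ) (hρ : 0 < ρ) (hpS : ρ ≤ ∫ x in S, p x) (hqS : 0 < ∫ x in S, q x) :
    (1/2) * ∫ x, |S.indicator (fun y => q y / ∫ z in S, q z) x
        - S.indicator (fun y => p y / ∫ z in S, p z) x|
      ≤ (3/(2*ρ)) * ((1/2) * ∫ x, |q x - p x|) := by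
  set P := ∫ z in S, p z with hPdef
  set Q := ∫ z in S, q z with hQdef
  have hP : 0 < P := lt_of_lt_of_le hρ hpS
  have hqp : Integrable (fun x => q x - p x) := hqi.sub hpi
  have hqpa : Integrable (fun x => |q x - p x|) := hqp.abs
  set T := ∫ x, |q x - p x| with hTdef
  have hTnn : 0 ≤ T := integral_nonneg fun x => abs_nonneg _
  -- D bound
  have hDle : ∫ x in S, |q x - p x| ≤ T := by
    rw [hTdef]
    exact setIntegral_le_integral hqpa (Filter.Eventually.of_forall fun x => abs_nonneg _)
  have hDnn : 0 ≤ ∫ x in S, |q x - p x| :=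
    integral_nonneg fun x => abs_nonneg _
  -- |P - Q| ≤ T/2
  have hQP : Q - P = ∫ x in S, (q x - p x) := by
    rw [integral_sub hqi.integrableOn hpi.integrableOn]
  have hsplit : (∫ x in S, (q x - p x)) + ∫ x in Sᶜ, (q x - p x) = 0 := by
    rw [integral_add_compl hS hqp, integral_sub hqi hpi, hq1, hp1]; ring
  have hPQ : |P - Q| ≤ T / 2 := by
    have h1 : |∫ x in S, (q x - p x)| ≤ ∫ x in S, |q x - p x| := by
      simpa [Real.norm_eq_abs] using
        norm_integral_le_integral_norm (μ := volume.restrict S) (fun x => q x - p x)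
    have h2 : |∫ x in Sᶜ, (q x - p x)| ≤ ∫ x in Sᶜ, |q x - p x| := by
      simpa [Real.norm_eq_abs] using
        norm_integral_le_integral_norm (μ := volume.restrict Sᶜ) (fun x => q x - p x)
    have hsum : (∫ x in S, |q x - p x|) + ∫ x in Sᶜ, |q x - p x| = T := by
      rw [hTdef, integral_add_compl hS hqpa]
    have heq : |P - Q| = |∫ x in Sᶜ, (q x - p x)| := by
      have : ∫ x in Sᶜ, (q x - p x) = P - Q := by
        have := hsplit; rw [← hQP] at this; linarith
      rw [this]
    have heq' : |P - Q| = |∫ x in S, (q x - p x)| := by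
      rw [← hQP, abs_sub_comm]
    nlinarith [abs_nonneg (P - Q)]
  -- rewrite LHS integrand
  have hind : ∀ x, |S.indicator (fun y => q y / Q) x - S.indicator (fun y => p y / P) x|
      = S.indicator (fun y => |q y / Q - p y / P|) x := by
    intro x
    by_cases hx : x ∈ S
    · simp [Set.indicator_of_mem hx]
    · simp [Set.indicator_of_notMem hx]
  have hLHS : (∫ x, |S.indicator (fun y => q y / Q) x - S.indicator (fun y => p y / P) x|)
      = ∫ x in S, |q x / Q - p x / P| := by
    simp_rw [hind]
    exact integral_indicator hS
  rw [hLHS]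
  -- pointwise bound on S
  set c := |1 / Q - 1 / P| with hcdef
  have hpb : ∀ x ∈ S, |q x / Q - p x / P| ≤ |q x - p x| * (1 / P) + q x * c := by
    intro x _
    have hdecomp : q x / Q - p x / P = (q x - p x) * (1 / P) + q x * (1 / Q - 1 / P) := by
      field_simp
      ring
    rw [hdecomp]
    calc |(q x - p x) * (1 / P) + q x * (1 / Q - 1 / P)|
        ≤ |(q x - p x) * (1 / P)| + |q x * (1 / Q - 1 / P)| := abs_add_le _ _
      _ = |q x - p x| * (1 / P) + q x * c := by
          rw [abs_mul, abs_mul, abs_of_nonneg (hq0 x), abs_of_pos (by positivity : (0:ℝ) < 1 / P)]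
  -- integrate the bound
  have hint1 : IntegrableOn (fun x => |q x / Q - p x / P|) S volume := by
    have : Integrable (fun x => |q x / Q - p x / P|) := by
      have : Integrable (fun x => q x / Q - p x / P) := by
        simpa [div_eq_mul_inv] using ((hqi.mul_const Q⁻¹).sub (hpi.mul_const P⁻¹) : Integrable (fun x => q x * Q⁻¹ - p x * P⁻¹))
      exact this.abs
    exact this.integrableOn
  have hint2 : IntegrableOn (fun x => |q x - p x| * (1 / P) + q x * c) S volume := by
    exact ((hqpa.mul_const _).add (hqi.mul_const _)).integrableOn
  have hintle : (∫ x in S, |q x / Q - p x / P|)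
      ≤ ∫ x in S, (|q x - p x| * (1 / P) + q x * c) := by
    refine setIntegral_mono_on hint1 hint2 hS hpb
  have hrint : (∫ x in S, (|q x - p x| * (1 / P) + q x * c))
      = (∫ x in S, |q x - p x|) * (1 / P) + Q * c := by
    rw [integral_add (hqpa.integrableOn.mul_const _) (hqi.integrableOn.mul_const _),
      integral_mul_const, integral_mul_const]
  have hQc : Q * c = |P - Q| / P := by
    rw [hcdef]
    have : 1 / Q - 1 / P = (P - Q) / (Q * P) := by field_simp
    rw [this, abs_div, abs_of_pos (by positivity : (0:ℝ) < Q * P)]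
    field_simp
  have hfinal : (∫ x in S, |q x / Q - p x / P|) ≤ (T + T / 2) / P := by
    calc (∫ x in S, |q x / Q - p x / P|)
        ≤ (∫ x in S, |q x - p x|) * (1 / P) + Q * c := le_of_le_of_eq hintle hrint
      _ = ((∫ x in S, |q x - p x|) + |P - Q|) / P := by rw [hQc]; field_simp
      _ ≤ (T + T / 2) / P := by gcongr ?_ / P; linarith
  have hPρ : (T + T / 2) / P ≤ (T + T / 2) / ρ := by
    gcongr
  have : (∫ x in S, |q x / Q - p x / P|) ≤ (T + T / 2) / ρ := le_trans hfinal hPρ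
  calc (1/2) * ∫ x in S, |q x / Q - p x / P| ≤ (1/2) * ((T + T / 2) / ρ) := by linarith
    _ = (3/(2*ρ)) * ((1/2) * T) := by field_simp; ring
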